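/- For every x ∈ X and every ε > 0 there exists R > 0 such that for every z = (a, t) with a a nonempty tuple and |z|₀ + |z|₁ > R, one has √(|z|₀ + 1)·‖μ(xz) − μ(z)‖₁ < ε, where xz := ((x, a₁,…,aₙ), t) is obtained by prepending the letter x. -/
import Mathlib


/-- The ℓ¹-norm of a finitely supported real-valued function. -/
def l1Norm {X : Type*} (φ : X →₀ ℝ) : ℝ := ∑ x ∈ φ.support, |φ x|

/-- `ω(z)` for `z = (x, g)` with `x = (x₁,…,xₘ)` a tuple in `X` and `g ∈ Γ`:
`ω(z) = Σᵢ (m + min{|xᵢ|_X, |g⁻¹·xᵢ|_X})·δ_{xᵢ}`. -/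
noncomputable def omegaTuple {X Γ : Type*} [Group Γ] [MulAction Γ X] (nX : X → ℝ)
    {m : ℕ} (x : Fin m → X) (g : Γ) : X →₀ ℝ :=
  ∑ i, Finsupp.single (x i) ((m : ℝ) + min (nX (x i)) (nX (g⁻¹ • x i)))

/-- `μ(z) := ω(z)/‖ω(z)‖₁`. -/
noncomputable def muTuple {X Γ : Type*} [Group Γ] [MulAction Γ X] (nX : X → ℝ)
    {m : ℕ} (x : Fin m → X) (g : Γ) : X →₀ ℝ :=
  (l1Norm (omegaTuple nX x g))⁻¹ • omegaTuple nX x g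

section Aux
variable {X : Type*}

lemma l1Norm_eq_sum_subset (φ : X →₀ ℝ) {s : Finset X} (h : φ.support ⊆ s) :
    l1Norm φ = ∑ x ∈ s, |φ x| := by
  refine Finset.sum_subset h ?_
  intro y _ hy
  simp [Finsupp.notMem_support_iff.mp hy]

lemma l1Norm_nonneg (φ : X →₀ ℝ) : 0 ≤ l1Norm φ :=
  Finset.sum_nonneg fun _ _ => abs_nonneg _

lemma l1Norm_add_le (φ ψ : X →₀ ℝ) : l1Norm (φ + ψ) ≤ l1Norm φ + l1Norm ψ := by
  classical
  rw [l1Norm_eq_sum_subset (φ + ψ) Finsupp.support_add,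
      l1Norm_eq_sum_subset φ (Finset.subset_union_left),
      l1Norm_eq_sum_subset ψ (Finset.subset_union_right),
      ← Finset.sum_add_distrib]
  exact Finset.sum_le_sum fun y _ => by simpa using abs_add_le (φ y) (ψ y)

lemma l1Norm_smul (c : ℝ) (φ : X →₀ ℝ) : l1Norm (c • φ) = |c| * l1Norm φ := by
  rw [l1Norm_eq_sum_subset (c • φ) (Finsupp.support_smul), l1Norm, Finset.mul_sum]
  exact Finset.sum_congr rfl fun y _ => by simp [abs_mul]

lemma l1Norm_single (a : X) (w : ℝ) : l1Norm (Finsupp.single a w) = |w| := by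
  rcases eq_or_ne w 0 with h | h
  · simp [h, l1Norm]
  · rw [l1Norm, Finsupp.support_single_ne_zero _ h]; simp

lemma l1Norm_sum_single {k : ℕ} (a : Fin k → X) (w : Fin k → ℝ) (hw : ∀ i, 0 ≤ w i) :
    l1Norm (∑ i, Finsupp.single (a i) (w i)) = ∑ i, w i := by
  set φ := ∑ i, Finsupp.single (a i) (w i) with hφdef
  have hφ : ∀ y, 0 ≤ φ y := by
    classical
    intro y
    rw [hφdef, Finsupp.finset_sum_apply]
    refine Finset.sum_nonneg fun i _ => ?_
    rw [Finsupp.single_apply]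
    split <;> simp [hw i]
  have h1 : l1Norm φ = φ.sum fun _ v => v := by
    rw [l1Norm, Finsupp.sum]
    exact Finset.sum_congr rfl fun y _ => abs_of_nonneg (hφ y)
  rw [h1, hφdef, ← Finsupp.sum_finset_sum_index (by simp) (by intros; rfl)]
  exact Finset.sum_congr rfl fun i _ => Finsupp.sum_single_index rfl

end Aux

lemma l1Norm_omega {X Γ : Type*} [Group Γ] [MulAction Γ X] (nX : X → ℝ)
    (h0 : ∀ y, 0 ≤ nX y) {k : ℕ} (a : Fin k → X) (g : Γ) :
    l1Norm (omegaTuple nX a g) = (k : ℝ) * k + ∑ i, min (nX (a i)) (nX (g⁻¹ • a i)) := by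
  rw [omegaTuple,
    l1Norm_sum_single _ _ (fun i => add_nonneg (Nat.cast_nonneg k) (le_min (h0 _) (h0 _)))]
  rw [Finset.sum_add_distrib, Finset.sum_const, Finset.card_univ, Fintype.card_fin,
    nsmul_eq_mul]

set_option maxHeartbeats 1000000 in
/-- For every `x ∈ X` and `ε > 0` there is `R > 0` such that whenever `|z|₀ + |z|₁ > R`,
one has `√(|z|₀ + 1)·‖μ(xz) − μ(z)‖₁ < ε`, where `xz` prepends the letter `x` to `z`. -/
theorem sqrt_mul_mu_creation_small {X Γ : Type*} [Group Γ] [MulAction Γ X]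
    (nX : X → ℝ) (nG : Γ → ℝ)
    (hX0 : ∀ x, 0 ≤ nX x) (hG0 : ∀ g, 0 ≤ nG g)
    (hcompat : ∀ (g : Γ) (x : X), nX (g • x) ≤ nG g + nX x)
    (hsymm : ∀ g : Γ, nG g⁻¹ = nG g)
    (x : X) (ε : ℝ) (hε : 0 < ε) :
    ∃ R : ℝ, 0 < R ∧
      ∀ (n : ℕ) (a : Fin (n + 1) → X) (t : Γ),
        ((n : ℝ) + 1) + (∑ i, min (nX (a i)) (nX (t⁻¹ • a i))) > R →
          Real.sqrt ((n : ℝ) + 2) *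
            l1Norm (muTuple nX (Fin.cons x a) t - muTuple nX a t) < ε := by
  classical
  set C := nX x with hCdef
  have hC : 0 ≤ C := hX0 x
  refine ⟨max 1 (256 * (3 + C) ^ 4 / ε ^ 4), lt_of_lt_of_le one_pos (le_max_left _ _), ?_⟩
  intro n a t hT
  set S := ∑ i, min (nX (a i)) (nX (t⁻¹ • a i)) with hSdef
  set m : ℝ := (n : ℝ) + 1 with hmdef
  set cx := min (nX x) (nX (t⁻¹ • x)) with hcxdef
  have hm : (1 : ℝ) ≤ m := le_add_of_nonneg_left (Nat.cast_nonneg n)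
  have hm0 : (0 : ℝ) ≤ m := by linarith
  have hS : 0 ≤ S := by
    rw [hSdef]; exact Finset.sum_nonneg fun i _ => le_min (hX0 _) (hX0 _)
  have hcx0 : 0 ≤ cx := le_min (hX0 _) (hX0 _)
  have hcxC : cx ≤ C := min_le_left _ _
  -- norms of omega
  have hN : l1Norm (omegaTuple nX a t) = m * m + S := by
    rw [l1Norm_omega nX hX0 a t, ← hSdef, hmdef]; push_cast; ring
  have hN' : l1Norm (omegaTuple nX (Fin.cons x a) t) = (m + 1) * (m + 1) + (cx + S) := by
    rw [l1Norm_omega nX hX0 (Fin.cons x a) t, Fin.sum_univ_succ]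
    simp only [Fin.cons_zero, Fin.cons_succ]
    rw [← hSdef, ← hcxdef, hmdef]; push_cast; ring
  have hN1pos : (0 : ℝ) < m * m + S := by nlinarith
  have hN2pos : (0 : ℝ) < (m + 1) * (m + 1) + (cx + S) := by nlinarith
  have hNle : m * m + S ≤ (m + 1) * (m + 1) + (cx + S) := by nlinarith
  -- decomposition of the omega difference
  have hsplit : omegaTuple nX (Fin.cons x a) t - omegaTuple nX a t
      = Finsupp.single x ((m + 1) + cx) + ∑ i, Finsupp.single (a i) (1 : ℝ) := by
    rw [omegaTuple, omegaTuple, Fin.sum_univ_succ]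
    simp only [Fin.cons_zero, Fin.cons_succ]
    have hco : ∀ i : Fin (n + 1),
        Finsupp.single (a i) (((n + 1 + 1 : ℕ) : ℝ) + min (nX (a i)) (nX (t⁻¹ • a i)))
          = Finsupp.single (a i) (((n + 1 : ℕ) : ℝ) + min (nX (a i)) (nX (t⁻¹ • a i)))
            + Finsupp.single (a i) 1 := by
      intro i; rw [← Finsupp.single_add]; congr 1; push_cast; ring
    rw [Finset.sum_congr rfl fun i _ => hco i, Finset.sum_add_distrib]
    have hcast : ((n + 1 + 1 : ℕ) : ℝ) = m + 1 := by rw [hmdef]; push_cast; ring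
    rw [hcast, ← hcxdef]
    abel
  -- bound on the l1-norm of the omega difference
  have hLdiff : l1Norm (omegaTuple nX (Fin.cons x a) t - omegaTuple nX a t)
      ≤ 2 * m + 1 + cx := by
    rw [hsplit]
    refine le_trans (l1Norm_add_le _ _) ?_
    rw [l1Norm_single,
      l1Norm_sum_single a (fun _ => (1 : ℝ)) (fun _ => zero_le_one),
      abs_of_nonneg (by linarith : (0 : ℝ) ≤ (m + 1) + cx),
      Finset.sum_const, Finset.card_univ, Fintype.card_fin, nsmul_eq_mul, mul_one]
    rw [hmdef]; push_cast; linarith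
  -- decomposition of the mu difference
  have hmu : muTuple nX (Fin.cons x a) t - muTuple nX a t
      = (l1Norm (omegaTuple nX (Fin.cons x a) t))⁻¹
          • (omegaTuple nX (Fin.cons x a) t - omegaTuple nX a t)
        + ((l1Norm (omegaTuple nX (Fin.cons x a) t))⁻¹ - (l1Norm (omegaTuple nX a t))⁻¹)
          • omegaTuple nX a t := by
    rw [muTuple, muTuple, smul_sub, sub_smul]; abel
  set B := 2 * (2 * m + 1 + C) / (m * m + S) with hBdef
  have hDle : l1Norm (muTuple nX (Fin.cons x a) t - muTuple nX a t) ≤ B := by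
    rw [hmu]
    refine le_trans (l1Norm_add_le _ _) ?_
    rw [l1Norm_smul, l1Norm_smul, hN, hN']
    have habs1 : |((m + 1) * (m + 1) + (cx + S))⁻¹| = ((m + 1) * (m + 1) + (cx + S))⁻¹ :=
      abs_of_nonneg (inv_nonneg.mpr hN2pos.le)
    have hinvle : ((m + 1) * (m + 1) + (cx + S))⁻¹ ≤ (m * m + S)⁻¹ :=
      inv_anti₀ hN1pos hNle
    have habs2 : |((m + 1) * (m + 1) + (cx + S))⁻¹ - (m * m + S)⁻¹|
        = (m * m + S)⁻¹ - ((m + 1) * (m + 1) + (cx + S))⁻¹ := by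
      rw [abs_of_nonpos (by linarith)]; ring
    rw [habs1, habs2]
    have h1 : ((m + 1) * (m + 1) + (cx + S))⁻¹
          * l1Norm (omegaTuple nX (Fin.cons x a) t - omegaTuple nX a t)
        ≤ (2 * m + 1 + cx) / ((m + 1) * (m + 1) + (cx + S)) := by
      rw [div_eq_inv_mul]
      exact mul_le_mul_of_nonneg_left hLdiff (inv_nonneg.mpr hN2pos.le)
    have h2 : ((m * m + S)⁻¹ - ((m + 1) * (m + 1) + (cx + S))⁻¹) * (m * m + S)
        = (2 * m + 1 + cx) / ((m + 1) * (m + 1) + (cx + S)) := by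
      field_simp
      ring
    have h3 : 2 * (2 * m + 1 + cx) / ((m + 1) * (m + 1) + (cx + S)) ≤ B := by
      rw [hBdef]
      exact div_le_div₀ (by linarith) (by linarith) hN1pos hNle
    calc ((m + 1) * (m + 1) + (cx + S))⁻¹
          * l1Norm (omegaTuple nX (Fin.cons x a) t - omegaTuple nX a t)
        + ((m * m + S)⁻¹ - ((m + 1) * (m + 1) + (cx + S))⁻¹) * (m * m + S)
        ≤ (2 * m + 1 + cx) / ((m + 1) * (m + 1) + (cx + S))
          + (2 * m + 1 + cx) / ((m + 1) * (m + 1) + (cx + S)) := by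
          rw [h2]; linarith [h1]
      _ = 2 * (2 * m + 1 + cx) / ((m + 1) * (m + 1) + (cx + S)) := by ring
      _ ≤ B := h3
  have hB0 : 0 ≤ B := by
    rw [hBdef]; exact div_nonneg (by linarith) hN1pos.le
  -- arithmetic endgame
  have hε4 : (0 : ℝ) < ε ^ 4 := by positivity
  have hεT : 256 * (3 + C) ^ 4 < (m + S) * ε ^ 4 := by
    have hQ : 256 * (3 + C) ^ 4 / ε ^ 4 < m + S := lt_of_le_of_lt (le_max_right _ _) hT
    exact (div_lt_iff₀ hε4).mp hQ
  have h78 : m ^ 7 ≤ m ^ 8 := by nlinarith [pow_nonneg hm0 7]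
  have hpoly : m ^ 6 * (m + S) ≤ 4 * (m * m + S) ^ 4 := by
    have e1 : 4 * (m * m + S) ^ 4
        = 4 * m ^ 8 + 16 * (m ^ 6 * S) + 24 * (m ^ 4 * S ^ 2)
          + 16 * (m ^ 2 * S ^ 3) + 4 * S ^ 4 := by ring
    have e2 : m ^ 6 * (m + S) = m ^ 7 + m ^ 6 * S := by ring
    have n1 : 0 ≤ m ^ 6 * S := mul_nonneg (pow_nonneg hm0 6) hS
    have n2 : 0 ≤ m ^ 4 * S ^ 2 := mul_nonneg (pow_nonneg hm0 4) (sq_nonneg S)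
    have n3 : 0 ≤ m ^ 2 * S ^ 3 := mul_nonneg (sq_nonneg m) (pow_nonneg hS 3)
    have n4 : 0 ≤ S ^ 4 := pow_nonneg hS 4
    have n5 : 0 ≤ m ^ 8 := pow_nonneg hm0 8
    linarith [h78, n1, n2, n3, n4, n5]
  have hm6 : (0 : ℝ) < m ^ 6 := by positivity
  have hkey : 64 * (3 + C) ^ 4 * m ^ 6 < ε ^ 4 * (m * m + S) ^ 4 := by
    have h1 : 256 * (3 + C) ^ 4 * m ^ 6 < ((m + S) * ε ^ 4) * m ^ 6 :=
      mul_lt_mul_of_pos_right hεT hm6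
    have h2 : ε ^ 4 * (m ^ 6 * (m + S)) ≤ ε ^ 4 * (4 * (m * m + S) ^ 4) :=
      mul_le_mul_of_nonneg_left hpoly hε4.le
    nlinarith [h1, h2]
  have ha : 2 * m + 1 + C ≤ (3 + C) * m := by
    nlinarith [mul_nonneg (sub_nonneg.mpr hm) (by linarith : (0 : ℝ) ≤ 1 + C)]
  have hq0 : (0 : ℝ) ≤ 2 * m + 1 + C := by linarith
  have hb : (2 * m + 1 + C) ^ 2 ≤ ((3 + C) * m) ^ 2 := pow_le_pow_left₀ hq0 ha 2
  have hX1 : 4 * (m + 1) * (2 * m + 1 + C) ^ 2 ≤ 8 * (3 + C) ^ 2 * m ^ 3 := by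
    have h1 : 4 * (m + 1) ≤ 8 * m := by linarith
    have h2 := mul_le_mul h1 hb (sq_nonneg _) (by linarith : (0 : ℝ) ≤ 8 * m)
    calc 4 * (m + 1) * (2 * m + 1 + C) ^ 2 = (4 * (m + 1)) * ((2 * m + 1 + C) ^ 2) := by ring
      _ ≤ (8 * m) * (((3 + C) * m) ^ 2) := h2
      _ = 8 * (3 + C) ^ 2 * m ^ 3 := by ring
  have hX10 : (0 : ℝ) ≤ 4 * (m + 1) * (2 * m + 1 + C) ^ 2 := by
    nlinarith [sq_nonneg (2 * m + 1 + C), hm]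
  have hX1sq : (4 * (m + 1) * (2 * m + 1 + C) ^ 2) ^ 2 < (ε ^ 2 * (m * m + S) ^ 2) ^ 2 := by
    calc (4 * (m + 1) * (2 * m + 1 + C) ^ 2) ^ 2 ≤ (8 * (3 + C) ^ 2 * m ^ 3) ^ 2 :=
          pow_le_pow_left₀ hX10 hX1 2
      _ = 64 * (3 + C) ^ 4 * m ^ 6 := by ring
      _ < ε ^ 4 * (m * m + S) ^ 4 := hkey
      _ = (ε ^ 2 * (m * m + S) ^ 2) ^ 2 := by ring
  have hX : 4 * (m + 1) * (2 * m + 1 + C) ^ 2 < ε ^ 2 * (m * m + S) ^ 2 :=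
    lt_of_pow_lt_pow_left₀ 2 (by positivity) hX1sq
  have h2m : ((n : ℝ) + 2) = m + 1 := by rw [hmdef]; ring
  rw [h2m]
  have hfin : Real.sqrt (m + 1) * B < ε := by
    have hx0 : 0 ≤ Real.sqrt (m + 1) * B := mul_nonneg (Real.sqrt_nonneg _) hB0
    have hsq : (Real.sqrt (m + 1) * B) ^ 2 < ε ^ 2 := by
      rw [mul_pow, Real.sq_sqrt (by linarith : (0 : ℝ) ≤ m + 1)]
      have hBeq : (m + 1) * B ^ 2 = (4 * (m + 1) * (2 * m + 1 + C) ^ 2) / ((m * m + S) ^ 2) := by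
        rw [hBdef]; field_simp; ring
      rw [hBeq, div_lt_iff₀ (by positivity : (0 : ℝ) < (m * m + S) ^ 2)]
      linarith [hX]
    exact lt_of_pow_lt_pow_left₀ 2 hε.le hsq
  calc Real.sqrt (m + 1) * l1Norm (muTuple nX (Fin.cons x a) t - muTuple nX a t)
      ≤ Real.sqrt (m + 1) * B := mul_le_mul_of_nonneg_left hDle (Real.sqrt_nonneg _)
    _ < ε := hfin
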